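/- The L_L-formula l(X) = r(X) defines the set of finite subsets of 𝕀 in L(𝕀): for A ∈ P_fci(𝕀), l(A) = r(A) if and only if A is a finite set. -/

import Mathlib

namespace MCpaper

open FirstOrder Language Structure Set

/-- `𝕀`: a dense linear order with a least element `0` and no greatest element,
concretely the nonnegative rationals. -/
abbrev II : Type := NNRat

/-! ### Set-level operations associated to a linear order -/

section SetOps

variable {α : Type*} [LinearOrder α]

/-- The singleton of the least element of `A` (as a set; empty if `A` has no least element). -/
def minSet (A : Set α) : Set α := {i ∈ A | ∀ j ∈ A, i ≤ j}

/-- The singleton of the greatest element of `A` (as a set; empty if `A` has no greatest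
element). -/
def maxSet (A : Set α) : Set α := {i ∈ A | ∀ j ∈ A, j ≤ i}

/-- `sInvSet A B = {i ∈ A : i has a successor in the suborder A and that successor lies in B}`. -/
def sInvSet (A B : Set α) : Set α :=
  {i ∈ A | ∃ j ∈ A, i < j ∧ (∀ k ∈ A, i < k → j ≤ k) ∧ j ∈ B}

lemma minSet_subset (A : Set α) : minSet A ⊆ A := sep_subset _ _

lemma minSet_subsingleton (A : Set α) : (minSet A).Subsingleton :=
  fun x hx y hy => le_antisymm (hx.2 y hy.1) (hy.2 x hx.1)

lemma maxSet_subsingleton (A : Set α) : (maxSet A).Subsingleton :=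
  fun x hx y hy => le_antisymm (hy.2 x hx.1) (hx.2 y hy.1)
lemma maxSet_subset (A : Set α) : maxSet A ⊆ A := sep_subset _ _
lemma sInvSet_subset (A B : Set α) : sInvSet A B ⊆ A := sep_subset _ _

end SetOps

/-! ### The languages -/

/-- Relation symbols of `L_MO = {⊆, ∃<}`. -/
inductive MORel : ℕ → Type
  | sub : MORel 2
  | elt : MORel 2

/-- The language `L_MO = {⊆, ∃<}` with two binary relation symbols. -/
def LMO : Language := ⟨fun _ => Empty, MORel⟩

/-- Function symbols of `L_WSO`. -/
inductive WSOFunc : ℕ → Type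
  | union : WSOFunc 2
  | inter : WSOFunc 2
  | bot : WSOFunc 0
  | zero : WSOFunc 0
  | min : WSOFunc 1
  | max : WSOFunc 1
  | sinv : WSOFunc 2

/-- The language `L_WSO = {∪, ∩, ⊥, 𝟎, min, max, 𝔰⁻¹}`. -/
def LWSO : Language := ⟨WSOFunc, fun _ => Empty⟩

/-- Function symbols of `L_MSOFin`. -/
inductive MSOFinFunc : ℕ → Type
  | union : MSOFinFunc 2
  | inter : MSOFinFunc 2
  | bot : MSOFinFunc 0
  | zero : MSOFinFunc 0
  | zeroStar : MSOFinFunc 0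
  | sinv : MSOFinFunc 1

/-- The language `L_MSOFin = {∪, ∩, ⊥, 𝟎, 𝟎*, s⁻¹}`. -/
def LMSOFin : Language := ⟨MSOFinFunc, fun _ => Empty⟩

/-- Function symbols of `L_L`. -/
inductive LLFunc : ℕ → Type
  | union : LLFunc 2
  | inter : LLFunc 2
  | bot : LLFunc 0
  | zero : LLFunc 0
  | min : LLFunc 1
  | max : LLFunc 1
  | left : LLFunc 1
  | right : LLFunc 1

/-- The language `L_L = {∪, ∩, ⊥, 𝟎, min, max, l, r}`. -/
def LL : Language := ⟨LLFunc, fun _ => Empty⟩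

/-! ### `WSO(𝕀)` as an `L_WSO`-structure and as an `L_MO`-structure -/

/-- The universe of `WSO(𝕀)`: finite subsets of `𝕀`. -/
abbrev FinSub : Type := {A : Set II // A.Finite}

/-- `WSO(𝕀)` as an `L_WSO`-structure. -/
instance finSubLWSO : LWSO.Structure FinSub where
  funMap {n} f :=
    match f with
    | .union => fun v => ⟨(v 0).1 ∪ (v 1).1, (v 0).2.union (v 1).2⟩
    | .inter => fun v => ⟨(v 0).1 ∩ (v 1).1, (v 0).2.inter_of_left _⟩
    | .bot => fun _ => ⟨∅, finite_empty⟩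
    | .zero => fun _ => ⟨{0}, finite_singleton _⟩
    | .min => fun v => ⟨minSet (v 0).1, (v 0).2.subset (minSet_subset _)⟩
    | .max => fun v => ⟨maxSet (v 0).1, (v 0).2.subset (maxSet_subset _)⟩
    | .sinv => fun v => ⟨sInvSet (v 0).1 (v 1).1, (v 0).2.subset (sInvSet_subset _ _)⟩
  RelMap {n} r := Empty.elim r

/-- `WSO(α)` as an `L_MO`-structure, for any linearly ordered `α` (here specialised to `𝕀`). -/
instance finSubLMO : LMO.Structure FinSub where
  funMap {n} f := Empty.elim f
  RelMap {n} r :=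
    match r with
    | .sub => fun v => (v 0).1 ⊆ (v 1).1
    | .elt => fun v => ∃ a ∈ (v 0).1, ∃ b ∈ (v 1).1, a < b

/-- `MSO(α)`: the `L_MO`-structure on the full powerset of a linear order `α`. -/
instance powersetLMO (α : Type*) [LinearOrder α] : LMO.Structure (Set α) where
  funMap {n} f := Empty.elim f
  RelMap {n} r :=
    match r with
    | .sub => fun v => v 0 ⊆ v 1
    | .elt => fun v => ∃ a ∈ v 0, ∃ b ∈ v 1, a < b

/-! ### `MSO(n)` and the pseudofinite theory `T_MSOFin` -/

/-- `MSO(n)` as an `L_MSOFin`-structure on the powerset of `{0, …, n-1}`. -/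
instance msoFinStructure (n : ℕ) : LMSOFin.Structure (Set (Fin n)) where
  funMap {m} f :=
    match f with
    | .union => fun v => v 0 ∪ v 1
    | .inter => fun v => v 0 ∩ v 1
    | .bot => fun _ => ∅
    | .zero => fun _ => {i : Fin n | (i : ℕ) = 0}
    | .zeroStar => fun _ => {i : Fin n | (i : ℕ) = n - 1}
    | .sinv => fun v => {i : Fin n | ∃ j : Fin n, (j : ℕ) = (i : ℕ) + 1 ∧ j ∈ v 0}
  RelMap {m} r := Empty.elim r

/-- The pseudofinite monadic second order theory of linear order: the set of `L_MSOFin`-sentences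
true in `MSO(n)` for every `n`. -/
def TMSOFin : LMSOFin.Theory := {φ : LMSOFin.Sentence | ∀ n : ℕ, Set (Fin n) ⊨ φ}

/-! ### Abstract `L_MO`-structures: atoms and interval restrictions -/

section LMOAbstract

variable {M : Type*} [LMO.Structure M]

/-- The interpretation of `⊆` in an `L_MO`-structure. -/
def mSub (a b : M) : Prop := RelMap (L := LMO) MORel.sub ![a, b]

/-- The interpretation of `∃<` in an `L_MO`-structure. -/
def mLt (a b : M) : Prop := RelMap (L := LMO) MORel.elt ![a, b]

/-- `b` is the least element of the partial order `(M, ⊆)`. -/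
def IsBotM (b : M) : Prop := ∀ x : M, mSub b x

/-- `a` is an atom of `(M, ⊆)`: a minimal element strictly above the least element. -/
def IsAtomM (a : M) : Prop :=
  ∃ b : M, IsBotM b ∧ a ≠ b ∧ ∀ x : M, mSub x a → x = a ∨ x = b

/-- The carrier `{B : M ∣ every atom X ⊆ B satisfies (i ∃< X ∨ X = i) ∧ X ∃< j}`
of the restriction `M ↾ [i,j)`. -/
def intervalRes (i j : M) : Set M :=
  {B : M | ∀ X : M, IsAtomM X → mSub X B → (mLt i X ∨ X = i) ∧ mLt X j}

/-- The `L_MO`-structure induced on a subset of an `L_MO`-structure. -/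
def inducedLMO (s : Set M) : LMO.Structure s where
  funMap {n} f := Empty.elim f
  RelMap {n} r v := RelMap (M := M) r fun k => (v k : M)

end LMOAbstract

/-! ### Abstract `L_WSO`-structures, restrictions to elements -/

section LWSOAbstract

variable {M : Type*} [LWSO.Structure M]

/-- The interpretation of `∪` in an `L_WSO`-structure. -/
def wUnion (a b : M) : M := funMap (L := LWSO) WSOFunc.union ![a, b]

/-- The interpretation of `∩` in an `L_WSO`-structure. -/
def wInter (a b : M) : M := funMap (L := LWSO) WSOFunc.inter ![a, b]

/-- The interpretation of `⊥` in an `L_WSO`-structure. -/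
def wBot : M := funMap (L := LWSO) (M := M) WSOFunc.bot ![]

/-- The interpretation of `𝟎` in an `L_WSO`-structure. -/
def wZero : M := funMap (L := LWSO) (M := M) WSOFunc.zero ![]

/-- The interpretation of `min` in an `L_WSO`-structure. -/
def wMin (a : M) : M := funMap (L := LWSO) WSOFunc.min ![a]

/-- The interpretation of `max` in an `L_WSO`-structure. -/
def wMax (a : M) : M := funMap (L := LWSO) WSOFunc.max ![a]

/-- The interpretation of `𝔰⁻¹` in an `L_WSO`-structure. -/
def wSInv (a b : M) : M := funMap (L := LWSO) WSOFunc.sinv ![a, b]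

variable (M)

/-- The universe `{B : M ∣ B ∩ A = B}` of the restriction `M ↾ A`. -/
def Res (A : M) : Type _ := {B : M // wInter B A = B}

/-- The (true in every model of `Th(WSO(𝕀))`) closure conditions saying that
`{B : M ∣ B ∩ A = B}` is closed under the operations of the restricted structure `M ↾ A`. -/
structure ResClosed (A : M) : Prop where
  union : ∀ B C : M, wInter B A = B → wInter C A = C → wInter (wUnion B C) A = wUnion B C
  inter : ∀ B C : M, wInter B A = B → wInter C A = C → wInter (wInter B C) A = wInter B C
  bot : wInter (wBot : M) A = wBot
  zero : wInter (wMin A) A = wMin A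
  zeroStar : wInter (wMax A) A = wMax A
  sinv : ∀ B : M, wInter B A = B → wInter (wSInv A B) A = wSInv A B

variable {M}

/-- The restriction `M ↾ A` as an `L_MSOFin`-structure: `∪`, `∩`, `⊥` are inherited from `M`,
`𝟎` is `min(A)`, `𝟎*` is `max(A)`, and `s⁻¹` is `B ↦ 𝔰⁻¹(A, B)` computed in `M`. -/
def resStructure {A : M} (hc : ResClosed M A) : LMSOFin.Structure (Res M A) where
  funMap {m} f :=
    match f with
    | .union => fun v => ⟨wUnion (v 0).1 (v 1).1, hc.union _ _ (v 0).2 (v 1).2⟩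
    | .inter => fun v => ⟨wInter (v 0).1 (v 1).1, hc.inter _ _ (v 0).2 (v 1).2⟩
    | .bot => fun _ => ⟨wBot, hc.bot⟩
    | .zero => fun _ => ⟨wMin A, hc.zero⟩
    | .zeroStar => fun _ => ⟨wMax A, hc.zeroStar⟩
    | .sinv => fun v => ⟨wSInv A (v 0).1, hc.sinv _ (v 0).2⟩
  RelMap {m} r := Empty.elim r

/-- `⌊Ā⌋ = 𝟎 ∪ A₁ ∪ … ∪ Aₙ`, computed in `M`. -/
def wFloor {n : ℕ} (A : Fin n → M) : M := (List.ofFn A).foldl wUnion wZero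

end LWSOAbstract

/-! ### Complexity classes of formulas -/

section Complexity

variable {L : Language} {α : Type*}

/-- Positive existential formulas: those built from atomic formulas using only `∧`, `∨`
and `∃`. -/
inductive IsPosEx : {n : ℕ} → L.BoundedFormula α n → Prop
  | equal {n} (t₁ t₂ : L.Term (α ⊕ Fin n)) : IsPosEx (BoundedFormula.equal t₁ t₂)
  | rel {n k} (R : L.Relations k) (ts : Fin k → L.Term (α ⊕ Fin n)) :
      IsPosEx (BoundedFormula.rel R ts)
  | inf {n} {φ ψ : L.BoundedFormula α n} : IsPosEx φ → IsPosEx ψ → IsPosEx (φ ⊓ ψ)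
  | sup {n} {φ ψ : L.BoundedFormula α n} : IsPosEx φ → IsPosEx ψ → IsPosEx (φ ⊔ ψ)
  | ex {n} {φ : L.BoundedFormula α (n + 1)} : IsPosEx φ → IsPosEx φ.ex

/-- Existential formulas: a block of existential quantifiers applied to a
quantifier-free formula. -/
inductive IsExist : {n : ℕ} → L.BoundedFormula α n → Prop
  | of_isQF {n} {φ : L.BoundedFormula α n} : φ.IsQF → IsExist φ
  | ex {n} {φ : L.BoundedFormula α (n + 1)} : IsExist φ → IsExist φ.ex

end Complexity

/-! ### Finite unions of closed intervals and the structure `L(𝕀)` -/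

/-- `A` is a finite union of closed intervals of `𝕀` (each of the form `[i,j]` or `[i,∞)`;
intervals of the form `(-∞, j]` coincide with `[0, j]` since `𝕀` has least element `0`). -/
def IsFCI (A : Set II) : Prop :=
  ∃ (k : ℕ) (f : Fin k → Set II),
    (∀ m : Fin k, (∃ i j : II, f m = Set.Icc i j) ∨ ∃ i : II, f m = Set.Ici i) ∧ A = ⋃ m, f m

/-- The universe of `L(𝕀)`: finite unions of closed intervals of `𝕀`. -/
abbrev FCI : Type := {A : Set II // IsFCI A}

/-- The set of left endpoints of `A`. -/
def lSet (A : Set II) : Set II := {i ∈ A | i = 0 ∨ ∃ i' < i, Set.Ioo i' i ∩ A = ∅}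

/-- The set of right endpoints of `A`. -/
def rSet (A : Set II) : Set II := {i ∈ A | ∃ i'', i < i'' ∧ Set.Ioo i i'' ∩ A = ∅}

lemma isFCI_empty : IsFCI (∅ : Set II) := ⟨0, Fin.elim0, fun m => m.elim0, by simp⟩

lemma isFCI_singleton (i : II) : IsFCI {i} :=
  ⟨1, fun _ => Set.Icc i i, fun _ => Or.inl ⟨i, i, rfl⟩, by simp⟩

lemma IsFCI.union {A B : Set II} (hA : IsFCI A) (hB : IsFCI B) : IsFCI (A ∪ B) := by
  obtain ⟨k, f, hf, rfl⟩ := hA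
  obtain ⟨l, g, hg, rfl⟩ := hB
  refine ⟨k + l, fun m => Sum.elim f g (finSumFinEquiv.symm m), fun m => ?_, ?_⟩
  · dsimp only
    rcases finSumFinEquiv.symm m with i | j
    · exact hf i
    · exact hg j
  · ext x
    simp only [Set.mem_union, Set.mem_iUnion]
    constructor
    · rintro (⟨i, hi⟩ | ⟨j, hj⟩)
      · exact ⟨finSumFinEquiv (Sum.inl i), by simpa using hi⟩
      · exact ⟨finSumFinEquiv (Sum.inr j), by simpa using hj⟩
    · rintro ⟨m, hm⟩
      rcases h : finSumFinEquiv.symm m with i | j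
      · rw [h] at hm; exact Or.inl ⟨i, hm⟩
      · rw [h] at hm; exact Or.inr ⟨j, hm⟩

lemma Icc_inter_Ici' {a b c : II} : Set.Icc a b ∩ Set.Ici c = Set.Icc (a ⊔ c) b := by
  ext x
  simp only [Set.mem_inter_iff, Set.mem_Icc, Set.mem_Ici, sup_le_iff]
  tauto

lemma IsFCI.inter {A B : Set II} (hA : IsFCI A) (hB : IsFCI B) : IsFCI (A ∩ B) := by
  obtain ⟨k, f, hf, rfl⟩ := hA
  obtain ⟨l, g, hg, rfl⟩ := hB
  refine ⟨k * l, fun m => f (finProdFinEquiv.symm m).1 ∩ g (finProdFinEquiv.symm m).2,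
    fun m => ?_, ?_⟩
  · dsimp only
    rcases hf (finProdFinEquiv.symm m).1 with ⟨a, b, hab⟩ | ⟨a, ha⟩ <;>
      rcases hg (finProdFinEquiv.symm m).2 with ⟨c, d, hcd⟩ | ⟨c, hc⟩
    · exact Or.inl ⟨a ⊔ c, b ⊓ d, by rw [hab, hcd, Set.Icc_inter_Icc]⟩
    · exact Or.inl ⟨a ⊔ c, b, by rw [hab, hc, Icc_inter_Ici']⟩
    · exact Or.inl ⟨c ⊔ a, d, by rw [ha, hcd, Set.inter_comm, Icc_inter_Ici']⟩
    · exact Or.inr ⟨a ⊔ c, by rw [ha, hc, Set.Ici_inter_Ici]⟩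
  · ext x
    simp only [Set.mem_inter_iff, Set.mem_iUnion]
    constructor
    · rintro ⟨⟨i, hi⟩, ⟨j, hj⟩⟩
      exact ⟨finProdFinEquiv (i, j), by simpa using ⟨hi, hj⟩⟩
    · rintro ⟨m, hm⟩
      exact ⟨⟨_, hm.1⟩, ⟨_, hm.2⟩⟩

lemma isFCI_minSet (A : Set II) : IsFCI (minSet A) := by
  rcases (minSet_subsingleton A).eq_empty_or_singleton with h | ⟨i, h⟩
  · rw [h]; exact isFCI_empty
  · rw [h]; exact isFCI_singleton i

lemma isFCI_maxSet (A : Set II) : IsFCI (maxSet A) := by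
  rcases (maxSet_subsingleton A).eq_empty_or_singleton with h | ⟨i, h⟩
  · rw [h]; exact isFCI_empty
  · rw [h]; exact isFCI_singleton i

lemma finite_isFCI {A : Set II} (hA : A.Finite) : IsFCI A := by
  induction A, hA using Set.Finite.induction_on
  · exact isFCI_empty
  · rw [Set.insert_eq]; exact (isFCI_singleton _).union (by assumption)

lemma IsFCI.lSet_finite {A : Set II} (hA : IsFCI A) : (lSet A).Finite := by
  obtain ⟨k, f, hf, rfl⟩ := hA
  have hsub : lSet (⋃ m, f m) ⊆ {0} ∪ ⋃ m, minSet (f m) := by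
    rintro i ⟨hiA, hi⟩
    rcases hi with rfl | ⟨i', hi'lt, hgap⟩
    · exact Set.mem_union_left _ rfl
    · obtain ⟨m, him⟩ := Set.mem_iUnion.1 hiA
      refine Set.mem_union_right _ (Set.mem_iUnion.2 ⟨m, him, fun j hj => ?_⟩)
      by_contra hji
      push_neg at hji
      obtain ⟨x, hx1, hx2⟩ := exists_between (max_lt hi'lt hji : max i' j < i)
      have hxfm : x ∈ f m := by
        rcases hf m with ⟨a, b, hab⟩ | ⟨a, ha⟩
        · rw [hab] at him hj ⊢
          exact ⟨hj.1.trans ((le_max_right i' j).trans hx1.le), hx2.le.trans him.2⟩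
        · rw [ha] at hj ⊢
          exact hj.trans ((le_max_right i' j).trans hx1.le)
      have hmem : x ∈ Set.Ioo i' i ∩ ⋃ m, f m :=
        ⟨⟨(le_max_left i' j).trans_lt hx1, hx2⟩, Set.mem_iUnion.2 ⟨m, hxfm⟩⟩
      rw [hgap] at hmem
      exact hmem
  exact ((Set.finite_singleton 0).union
    (Set.finite_iUnion fun m => (minSet_subsingleton (f m)).finite)).subset hsub

lemma IsFCI.rSet_finite {A : Set II} (hA : IsFCI A) : (rSet A).Finite := by
  obtain ⟨k, f, hf, rfl⟩ := hA
  have hsub : rSet (⋃ m, f m) ⊆ ⋃ m, maxSet (f m) := by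
    rintro i ⟨hiA, i'', hi''gt, hgap⟩
    obtain ⟨m, him⟩ := Set.mem_iUnion.1 hiA
    refine Set.mem_iUnion.2 ⟨m, him, fun j hj => ?_⟩
    by_contra hij
    push_neg at hij
    obtain ⟨x, hx1, hx2⟩ := exists_between (lt_min hi''gt hij : i < min i'' j)
    have hxfm : x ∈ f m := by
      rcases hf m with ⟨a, b, hab⟩ | ⟨a, ha⟩
      · rw [hab] at him hj ⊢
        exact ⟨him.1.trans hx1.le, (hx2.le.trans (min_le_right i'' j)).trans hj.2⟩
      · rw [ha] at him ⊢
        exact him.trans hx1.le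
    have hmem : x ∈ Set.Ioo i i'' ∩ ⋃ m, f m :=
      ⟨⟨hx1, hx2.trans_le (min_le_left i'' j)⟩, Set.mem_iUnion.2 ⟨m, hxfm⟩⟩
    rw [hgap] at hmem
    exact hmem
  exact (Set.finite_iUnion fun m => (maxSet_subsingleton (f m)).finite).subset hsub

/-- `L(𝕀)` as an `L_L`-structure. -/
instance fciLL : LL.Structure FCI where
  funMap {m} f :=
    match f with
    | .union => fun v => ⟨(v 0).1 ∪ (v 1).1, (v 0).2.union (v 1).2⟩
    | .inter => fun v => ⟨(v 0).1 ∩ (v 1).1, (v 0).2.inter (v 1).2⟩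
    | .bot => fun _ => ⟨∅, isFCI_empty⟩
    | .zero => fun _ => ⟨{0}, isFCI_singleton 0⟩
    | .min => fun v => ⟨minSet (v 0).1, isFCI_minSet _⟩
    | .max => fun v => ⟨maxSet (v 0).1, isFCI_maxSet _⟩
    | .left => fun v => ⟨lSet (v 0).1, finite_isFCI (v 0).2.lSet_finite⟩
    | .right => fun v => ⟨rSet (v 0).1, finite_isFCI (v 0).2.rSet_finite⟩
  RelMap {m} r := Empty.elim r

universe u v

/-!
Every point of a finite set is isolated on both sides, so it is both a left and a right endpoint.
Conversely, an infinite finite union `A` of closed intervals contains some `[i, b]` with `i < b`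
and `i` the least point of one of the intervals. Pushing `i` as far left as possible among the
finitely many least points of the intervals gives a left endpoint `z` with `[z, b] ⊆ A`, and such
a `z` is not a right endpoint because `𝕀` is dense.
-/

section Intervals

variable {α : Type*} [LinearOrder α]

lemma _root_.Set.Finite.exists_disjoint_Ioo_left {s : Set α} (hs : s.Finite)
    {a z : α} (haz : a < z) :
    ∃ c < z, Disjoint (Ioo c z) s := by
  induction s, hs using Set.Finite.induction_on with
  | empty => exact ⟨a, haz, disjoint_empty _⟩
  | @insert x s _ _ ih =>
    obtain ⟨c, hcz, hc⟩ := ih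
    refine ⟨if x < z then max c x else c, by split_ifs <;> simp [*], ?_⟩
    refine disjoint_insert_right.2 ⟨fun hx => ?_, hc.mono_left (Ioo_subset_Ioo_left ?_)⟩
    · split_ifs at hx with h
      · exact (le_max_right c x).not_gt hx.1
      · exact h hx.2
    · split_ifs <;> simp

lemma _root_.Set.Finite.exists_disjoint_Ioo_right {s : Set α} (hs : s.Finite)
    {z b : α} (hzb : z < b) :
    ∃ c, z < c ∧ Disjoint (Ioo z c) s := by
  induction s, hs using Set.Finite.induction_on with
  | empty => exact ⟨b, hzb, disjoint_empty _⟩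
  | @insert x s _ _ ih =>
    obtain ⟨c, hzc, hc⟩ := ih
    refine ⟨if z < x then min c x else c, by split_ifs <;> simp [*], ?_⟩
    refine disjoint_insert_right.2 ⟨fun hx => ?_, hc.mono_left (Ioo_subset_Ioo_right ?_)⟩
    · split_ifs at hx with h
      · exact (min_le_right c x).not_gt hx.2
      · exact h hx.1
    · split_ifs <;> simp

def IsClosedInterval (P : Set α) : Prop := (∃ i j, P = Icc i j) ∨ ∃ i, P = Ici i

lemma IsClosedInterval.exists_isLeast_Icc_subset [NoMaxOrder α] {P : Set α}
    (hP : IsClosedInterval P) (hinf : P.Infinite) : ∃ i b, IsLeast P i ∧ i < b ∧ Icc i b ⊆ P := by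
  rcases hP with ⟨i, j, rfl⟩ | ⟨i, rfl⟩
  · have hij : i < j := by
      by_contra! hji
      exact hinf ((Set.subsingleton_Icc_of_ge hji).finite)
    exact ⟨i, j, isLeast_Icc hij.le, hij, subset_rfl⟩
  · obtain ⟨b, hb⟩ := exists_gt i
    exact ⟨i, b, isLeast_Ici, hb, Icc_subset_Ici_self⟩

lemma IsClosedInterval.extends_left_or_disjoint_Ioo {P : Set α} (hP : IsClosedInterval P)
    {a z : α} (haz : a < z) :
    (∃ i, IsLeast P i ∧ i < z ∧ Icc i z ⊆ P) ∨ ∃ c < z, Disjoint (Ioo c z) P := by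
  rcases hP with ⟨i, j, rfl⟩ | ⟨i, rfl⟩
  · by_cases hiz : i < z
    · by_cases hzj : z ≤ j
      · exact Or.inl ⟨i, isLeast_Icc (hiz.le.trans hzj), hiz, Icc_subset_Icc_right hzj⟩
      · exact Or.inr ⟨j, not_le.1 hzj, Set.disjoint_left.2 fun y hy hy' => hy.1.not_ge hy'.2⟩
    · exact Or.inr ⟨a, haz, Set.disjoint_left.2 fun y hy hy' => hiz (hy'.1.trans_lt hy.2)⟩
  · by_cases hiz : i < z
    · exact Or.inl ⟨i, isLeast_Ici, hiz, Icc_subset_Ici_self⟩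
    · exact Or.inr ⟨a, haz, Set.disjoint_left.2 fun y hy hy' => hiz (hy'.trans_lt hy.2)⟩

end Intervals

lemma lSet_eq_self_of_finite {A : Set II} (hA : A.Finite) : lSet A = A := by
  refine subset_antisymm (sep_subset _ _) fun z hz => ⟨hz, ?_⟩
  rcases eq_zero_or_pos z with rfl | hz0
  · exact Or.inl rfl
  obtain ⟨c, hcz, hc⟩ := hA.exists_disjoint_Ioo_left hz0
  exact Or.inr ⟨c, hcz, Set.disjoint_iff_inter_eq_empty.1 hc⟩

lemma rSet_eq_self_of_finite {A : Set II} (hA : A.Finite) : rSet A = A := by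
  refine subset_antisymm (sep_subset _ _) fun z hz => ⟨hz, ?_⟩
  obtain ⟨c, hzc, hc⟩ := hA.exists_disjoint_Ioo_right (lt_add_one z)
  exact ⟨c, hzc, Set.disjoint_iff_inter_eq_empty.1 hc⟩

lemma notMem_rSet_of_Icc_subset {A : Set II} {z b : II} (hzb : z < b) (h : Icc z b ⊆ A) :
    z ∉ rSet A := by
  rintro ⟨-, c, hzc, hc⟩
  obtain ⟨y, hzy, hy⟩ := exists_between (lt_min hzc hzb)
  have : y ∈ Ioo z c ∩ A := ⟨⟨hzy, hy.trans_le (min_le_left c b)⟩,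
    h ⟨hzy.le, (hy.trans_le (min_le_right c b)).le⟩⟩
  rwa [hc] at this

lemma mem_lSet_or_extends_left {ι : Type*} [Fintype ι] {f : ι → Set II}
    (hf : ∀ m, IsClosedInterval (f m)) {z : II} (hz : z ∈ ⋃ m, f m) :
    z ∈ lSet (⋃ m, f m) ∨ ∃ m i, IsLeast (f m) i ∧ i < z ∧ Icc i z ⊆ f m := by
  rcases eq_zero_or_pos z with rfl | hz0
  · exact Or.inl ⟨hz, Or.inl rfl⟩
  by_cases hext : ∃ m i, IsLeast (f m) i ∧ i < z ∧ Icc i z ⊆ f m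
  · exact Or.inr hext
  have hgap (m : ι) : ∃ c < z, Disjoint (Ioo c z) (f m) :=
    ((hf m).extends_left_or_disjoint_Ioo hz0).resolve_left fun ⟨i, hi⟩ => hext ⟨m, i, hi⟩
  choose c hcz hc using hgap
  -- finitely many gaps to the left of `z` combine into one
  refine Or.inl ⟨hz, Or.inr ⟨Finset.univ.sup c, (Finset.sup_lt_iff hz0).2 fun m _ => hcz m, ?_⟩⟩
  refine Set.disjoint_iff_inter_eq_empty.1 (Set.disjoint_iUnion_right.2 fun m => ?_)
  exact (hc m).mono_left (Ioo_subset_Ioo_left (Finset.le_sup (Finset.mem_univ m)))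

lemma exists_mem_lSet_Icc_subset {ι : Type*} [Fintype ι] {f : ι → Set II}
    (hf : ∀ m, IsClosedInterval (f m)) {m₀ : ι} {i₀ b : II} (hi₀ : IsLeast (f m₀) i₀)
    (hi₀b : i₀ < b) (hsub : Icc i₀ b ⊆ ⋃ m, f m) :
    ∃ z ∈ lSet (⋃ m, f m), z < b ∧ Icc z b ⊆ ⋃ m, f m := by
  set S := {i ∈ ⋃ m, minSet (f m) | i < b ∧ Icc i b ⊆ ⋃ m, f m}
  have hS : S.Finite :=
    (Set.finite_iUnion fun m => (minSet_subsingleton (f m)).finite).subset (sep_subset _ _)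
  obtain ⟨z, ⟨-, hzb, hzsub⟩, hzmin⟩ :=
    hS.exists_minimal ⟨i₀, Set.mem_iUnion.2 ⟨m₀, hi₀⟩, hi₀b, hsub⟩
  refine ⟨z, ?_, hzb, hzsub⟩
  rcases mem_lSet_or_extends_left hf (hzsub ⟨le_rfl, hzb.le⟩) with hz | ⟨m, i, hi, hiz, hiz'⟩
  · exact hz
  have hib : Icc i b ⊆ ⋃ m, f m := fun y hy => (le_total y z).elim
    (fun hyz => Set.mem_iUnion.2 ⟨m, hiz' ⟨hy.1, hyz⟩⟩) fun hzy => hzsub ⟨hzy, hy.2⟩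
  exact absurd (hzmin ⟨Set.mem_iUnion.2 ⟨m, hi⟩, hiz.trans hzb, hib⟩ hiz.le) hiz.not_ge

lemma IsFCI.finite_of_lSet_eq_rSet {A : Set II} (hA : IsFCI A) (h : lSet A = rSet A) :
    A.Finite := by
  obtain ⟨k, f, hf, rfl⟩ :
      ∃ k, ∃ f : Fin k → Set II, (∀ m, IsClosedInterval (f m)) ∧ A = ⋃ m, f m := hA
  by_contra hinf
  obtain ⟨m₀, hm₀⟩ : ∃ m, (f m).Infinite := by
    by_contra! hfin
    exact hinf (Set.finite_iUnion hfin)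
  obtain ⟨i₀, b, hi₀, hi₀b, hsub⟩ := (hf m₀).exists_isLeast_Icc_subset hm₀
  obtain ⟨z, hz, hzb, hzsub⟩ := exists_mem_lSet_Icc_subset hf hi₀ hi₀b
    (hsub.trans (Set.subset_iUnion f m₀))
  exact notMem_rSet_of_Icc_subset hzb hzsub (h ▸ hz)

/-- The `L_L`-formula `l(X) = r(X)` defines the set of finite subsets of `𝕀`
in `L(𝕀)`: for `A ∈ P_fci(𝕀)`, `l(A) = r(A)` if and only if `A` is a finite set. -/
theorem lSet_eq_rSet_iff_finite (A : FCI) : lSet A.1 = rSet A.1 ↔ A.1.Finite :=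
  ⟨A.2.finite_of_lSet_eq_rSet, fun h => by rw [lSet_eq_self_of_finite h, rSet_eq_self_of_finite h]⟩

end MCpaper
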